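/- For every x ∈ [N], the twirled projection satisfies the operator identity (1/(N!)²) ∑_{σ ∈ S_N} ∑_{τ ∈ S_N} (L^τ R^σ)^† P_x (L^τ R^σ) = (1/x) I + (2(x−1)/x²) W^{(2)} + ((x−1)(x−2)/x²) W^{(3)} on ℓ²(S_N). -/

import Mathlib

open scoped Classical
open Matrix

/-- Embedding of `Fin (k+1)` into `Fin N` (where `k : Fin N`). -/
def emb {N : ℕ} (k : Fin N) (t : Fin (k.val + 1)) : Fin N :=
  ⟨t.val, lt_of_lt_of_le t.isLt k.isLt⟩

/-- `Phi t = (N t_N)(N−1 t_{N−1})⋯(2 t_2)(1 t_1)`, the strictly monotone factorization map. -/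
def Phi {N : ℕ} (t : ∀ k : Fin N, Fin (k.val + 1)) : Equiv.Perm (Fin N) :=
  ((List.finRange N).reverse.map fun k => Equiv.swap k (emb k (t k))).prod

instance {N : ℕ} : Nonempty (∀ k : Fin N, Fin (k.val + 1)) := ⟨fun _ => 0⟩

/-- `tof π` is the tuple `(t_1(π),…,t_N(π))` of the strictly monotone factorization of `π`. -/
noncomputable def tof {N : ℕ} (π : Equiv.Perm (Fin N)) : ∀ k : Fin N, Fin (k.val + 1) :=
  Function.invFun Phi π

/-- `ptail π k` is `π_{>k} = (N t_N)⋯(k+1 t_{k+1})`. -/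
noncomputable def ptail {N : ℕ} (π : Equiv.Perm (Fin N)) (k : Fin N) : Equiv.Perm (Fin N) :=
  (((List.finRange N).reverse.filter fun j => decide (k < j)).map
    fun j => Equiv.swap j (emb j (tof π j))).prod

/-- `phead π k` is `π_{<k} = (k−1 t_{k−1})⋯(1 t_1)`. -/
noncomputable def phead {N : ℕ} (π : Equiv.Perm (Fin N)) (k : Fin N) : Equiv.Perm (Fin N) :=
  (((List.finRange N).reverse.filter fun j => decide (j < k)).map
    fun j => Equiv.swap j (emb j (tof π j))).prod

/-- The matrix of the unitary `L^τ` on `ℓ²(S_N)`, `L^τ|π⟩ = |τπ⟩`. -/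
noncomputable def Lmat {N : ℕ} (τ : Equiv.Perm (Fin N)) :
    Matrix (Equiv.Perm (Fin N)) (Equiv.Perm (Fin N)) ℂ := fun ρ π =>
  if ρ = τ * π then 1 else 0

/-- The matrix of the unitary `R^σ` on `ℓ²(S_N)`, `R^σ|π⟩ = |πσ⁻¹⟩`. -/
noncomputable def Rmat {N : ℕ} (σ : Equiv.Perm (Fin N)) :
    Matrix (Equiv.Perm (Fin N)) (Equiv.Perm (Fin N)) ℂ := fun ρ π =>
  if ρ = π * σ⁻¹ then 1 else 0

/-- The matrix of the orthogonal projection `P_x` on `ℓ²(S_N)`, determined by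
`P_x|π⟩ = (1/x) ∑_{s=1}^{x} |π_{>x} (x s) π_{<x}⟩`. -/
noncomputable def PxPerm {N : ℕ} (x : Fin N) :
    Matrix (Equiv.Perm (Fin N)) (Equiv.Perm (Fin N)) ℂ := fun ρ π =>
  if ∃ s : Fin (x.val + 1), ρ = ptail π x * Equiv.swap x (emb x s) * phead π x then
    ((x.val : ℂ) + 1)⁻¹
  else 0

/-- `W^{(ℓ)}`, the average of `R^γ` over all `ℓ`-cycles `γ ∈ S_N`. -/
noncomputable def Wmat {N : ℕ} (l : ℕ) :
    Matrix (Equiv.Perm (Fin N)) (Equiv.Perm (Fin N)) ℂ :=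
  (((Finset.univ.filter fun γ : Equiv.Perm (Fin N) =>
        γ.IsCycle ∧ γ.support.card = l).card : ℂ))⁻¹ •
    ∑ γ ∈ Finset.univ.filter
        (fun γ : Equiv.Perm (Fin N) => γ.IsCycle ∧ γ.support.card = l),
      Rmat γ


/-!
Conjugating by `L^τ R^σ` moves the entry `(ρ, π)` to `(τρσ⁻¹, τπσ⁻¹)`, so the `(ρ, π)` entry of
the twirl of `P_x` is an average of `P_x (h b) b` over `b` and over the conjugates `h` of `ρπ⁻¹`;
by orbit–stabilizer only the cycle type of `ρ⁻¹π` matters. Writing `b = b_{>x} (x t) b_{<x}`,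
`P_x (h b) b ≠ 0` exactly when `h = b_{>x} (x s)(x t) b_{>x}⁻¹` for some `s`, and the digit
`t = t_x(b)` is uniformly distributed on `[x]`. So the entry is the number of pairs
`(s, t) ∈ [x]²` for which `(x s)(x t)` is conjugate to `ρ⁻¹π`, divided by `x²` and by the size of
the conjugacy class. The product `(x s)(x t)` is the identity for the `x` pairs with `s = t`, a
transposition for the `2(x - 1)` pairs in which exactly one of `s, t` equals `x`, and a 3-cycle
for the remaining `(x - 1)(x - 2)` pairs.

In the code the paper's `x` is `x.val + 1` for `x : Fin N`, so `s, t` range over `Fin (x.val + 1)`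
and `Fin.last` plays the role of `s = x`.
-/

open Equiv Finset
open scoped Nat

theorem List.eq_filter_lt_append_cons_filter_gt {α : Type*} [LinearOrder α] {l : List α}
    (hl : l.Pairwise (· > ·)) {x : α} (hx : x ∈ l) :
    l = l.filter (x < ·) ++ x :: l.filter (· < x) := by
  induction l with
  | nil => simp at hx
  | cons a l ih =>
    rw [List.pairwise_cons] at hl
    rcases List.mem_cons.mp hx with rfl | hx
    · have h₁ : l.filter (x < ·) = [] :=
        List.filter_eq_nil_iff.mpr fun j hj => by simpa using (hl.1 j hj).le
      have h₂ : l.filter (· < x) = l := List.filter_eq_self.mpr fun j hj => by simpa using hl.1 j hj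
      simp [h₁, h₂]
    · have hxa : x < a := hl.1 x hx
      simp [hxa, hxa.not_gt, ← ih hl.2 hx]

theorem mul_eq_mul_mul_iff_eq_conj {G : Type*} [Group G] (h u w v c : G) :
    h * (u * w * v) = u * c * v ↔ h = u * (c * w⁻¹) * u⁻¹ := by
  rw [show u * c * v = u * (c * w⁻¹) * u⁻¹ * (u * w * v) by group, mul_left_inj]

theorem sum_sum_mul_mul_inv {G M : Type*} [Group G] [Fintype G] [AddCommMonoid M]
    (A : G → G → M) (ρ π : G) :
    ∑ σ, ∑ τ, A (τ * ρ * σ⁻¹) (τ * π * σ⁻¹) = ∑ τ, ∑ b, A (τ * (ρ * π⁻¹) * τ⁻¹ * b) b := by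
  rw [sum_comm]
  refine sum_congr rfl fun τ _ => ?_
  conv_rhs => rw [← ((Equiv.inv G).trans (Equiv.mulLeft (τ * π))).sum_comp]
  refine sum_congr rfl fun σ _ => ?_
  simp only [Equiv.trans_apply, Equiv.inv_apply, Equiv.coe_mulLeft]
  congr 1
  group

section Conjugators

variable {G : Type*} [Group G] [Fintype G] [DecidableEq G]

theorem card_conjugators_eq_of_isConj {g h : G} (hgh : IsConj g h) :
    #{τ | τ * g * τ⁻¹ = h} = #{τ | τ * g * τ⁻¹ = g} := by
  obtain ⟨a, rfl⟩ := isConj_iff.mp hgh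
  refine card_bij' (fun τ _ => a⁻¹ * τ) (fun τ _ => a * τ) (fun τ hτ => ?_) (fun τ hτ => ?_)
    (by simp) (by simp)
  · simp only [mem_filter, mem_univ, true_and] at hτ ⊢
    rw [show a⁻¹ * τ * g * (a⁻¹ * τ)⁻¹ = a⁻¹ * (τ * g * τ⁻¹) * a by group, hτ]
    group
  · simp only [mem_filter, mem_univ, true_and] at hτ ⊢
    rw [show a * τ * g * (a * τ)⁻¹ = a * (τ * g * τ⁻¹) * a⁻¹ by group, hτ]

theorem card_conjugators_mul_card_conjClass (g h : G) :
    #{τ | τ * g * τ⁻¹ = h} * #{k | IsConj g k} = if IsConj g h then Fintype.card G else 0 := by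
  split_ifs with hgh
  · have hfib := card_eq_sum_card_fiberwise (s := univ) (t := {k | IsConj g k})
      (f := fun τ : G => τ * g * τ⁻¹) fun τ _ => by simp
    rw [card_univ, sum_congr rfl fun k hk => by
      simpa using card_conjugators_eq_of_isConj (mem_filter.mp hk).2] at hfib
    rw [card_conjugators_eq_of_isConj hgh, hfib, sum_const, smul_eq_mul, mul_comm]
  · rw [card_eq_zero.mpr (filter_eq_empty_iff.mpr fun τ _ hτ => hgh (isConj_iff.mpr ⟨τ, hτ⟩)),
      zero_mul]

omit [Fintype G] [DecidableEq G] in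
theorem isConj_conj_iff {g k : G} (u : G) : IsConj g (u * k * u⁻¹) ↔ IsConj g k :=
  have hk : IsConj k (u * k * u⁻¹) := isConj_iff.mpr ⟨u, rfl⟩
  ⟨fun h => h.trans hk.symm, fun h => h.trans hk⟩

end Conjugators

section CycleType

variable {α : Type*} [Fintype α] [DecidableEq α]

theorem Equiv.Perm.cycleType_eq_singleton_iff {σ : Perm α} {n : ℕ} :
    σ.cycleType = {n} ↔ σ.IsCycle ∧ #σ.support = n := by
  refine ⟨fun h => ?_, fun ⟨hc, hn⟩ => hn ▸ hc.cycleType⟩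
  have hc : σ.IsCycle := Perm.card_cycleType_eq_one.mp (by simp [h])
  exact ⟨hc, Multiset.singleton_inj.mp (hc.cycleType.symm.trans h)⟩

theorem Equiv.Perm.card_filter_cycleType_eq_zero : #{σ : Perm α | σ.cycleType = 0} = 1 :=
  card_eq_one.mpr ⟨1, by ext; simp [Perm.cycleType_eq_zero]⟩

end CycleType

variable {N : ℕ}

theorem emb_injective (k : Fin N) : Function.Injective (emb k) := fun _ _ h => by
  simpa [emb, Fin.ext_iff] using h

theorem emb_eq_self_iff {k : Fin N} {s : Fin (k.val + 1)} : emb k s = k ↔ s = Fin.last k.val := by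
  simp [emb, Fin.ext_iff]

theorem emb_last (x : Fin N) : emb x (Fin.last _) = x :=
  emb_eq_self_iff.mpr rfl

theorem emb_castSucc_ne (x : Fin N) (i : Fin x.val) : emb x i.castSucc ≠ x := by
  simp [emb_eq_self_iff, Fin.castSucc_ne_last]

def swapProd (t : ∀ k : Fin N, Fin (k.val + 1)) (l : List (Fin N)) : Perm (Fin N) :=
  (l.map fun k => swap k (emb k (t k))).prod

theorem swapProd_cons (t : ∀ k : Fin N, Fin (k.val + 1)) (k : Fin N) (l : List (Fin N)) :
    swapProd t (k :: l) = swap k (emb k (t k)) * swapProd t l := by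
  simp [swapProd]

theorem swapProd_apply_of_forall_lt (t : ∀ k : Fin N, Fin (k.val + 1)) {l : List (Fin N)}
    {p : Fin N} (hl : ∀ j ∈ l, j < p) : swapProd t l p = p := by
  induction l with
  | nil => rfl
  | cons k l ih =>
    simp only [List.forall_mem_cons] at hl
    rw [swapProd_cons, Perm.mul_apply, ih hl.2]
    have : emb k (t k) < p := Fin.lt_def.mpr <| by
      have := (t k).isLt; have := Fin.lt_def.mp hl.1; simp only [emb, gt_iff_lt]; omega
    exact swap_apply_of_ne_of_ne hl.1.ne' this.ne'

theorem eq_of_swapProd_eq {t t' : ∀ k : Fin N, Fin (k.val + 1)} {l : List (Fin N)}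
    (hl : l.Pairwise (· > ·)) (h : swapProd t l = swapProd t' l) : ∀ k ∈ l, t k = t' k := by
  induction l with
  | nil => simp
  | cons a l ih =>
    rw [List.pairwise_cons] at hl
    have apply_head : ∀ t, swapProd t (a :: l) a = emb a (t a) := fun t => by
      rw [swapProd_cons, Perm.mul_apply, swapProd_apply_of_forall_lt t hl.1, swap_apply_left]
    have ha : t a = t' a := emb_injective a (by rw [← apply_head, ← apply_head, h])
    rw [swapProd_cons, swapProd_cons, ha, mul_right_inj] at h
    simpa [ha] using ih hl.2 h

theorem pairwise_gt_finRange_reverse : (List.finRange N).reverse.Pairwise (· > ·) :=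
  List.pairwise_reverse.mpr (List.pairwise_lt_finRange N)

theorem Phi_injective : Function.Injective (Phi (N := N)) := fun _ _ h =>
  funext fun k => eq_of_swapProd_eq pairwise_gt_finRange_reverse h k (by simp)

theorem card_pi_fin_val_succ : Fintype.card (∀ k : Fin N, Fin (k.val + 1)) = N ! := by
  simp [Fintype.card_pi, Fin.prod_univ_eq_prod_range (· + 1) N, prod_range_add_one_eq_factorial]

theorem Phi_bijective : Function.Bijective (Phi (N := N)) :=
  (Fintype.bijective_iff_injective_and_card _).mpr
    ⟨Phi_injective, by rw [card_pi_fin_val_succ, Fintype.card_perm, Fintype.card_fin]⟩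

theorem Phi_tof (π : Perm (Fin N)) : Phi (tof π) = π :=
  Function.invFun_eq (Phi_bijective.surjective π)

theorem tof_Phi (t : ∀ k : Fin N, Fin (k.val + 1)) : tof (Phi t) = t :=
  Function.leftInverse_invFun Phi_injective t

theorem ptail_mul_swap_mul_phead (π : Perm (Fin N)) (x : Fin N) :
    ptail π x * swap x (emb x (tof π x)) * phead π x = π := by
  have hx : x ∈ (List.finRange N).reverse := List.mem_reverse.mpr (List.mem_finRange x)
  conv_rhs =>
    rw [← Phi_tof π, Phi, List.eq_filter_lt_append_cons_filter_gt pairwise_gt_finRange_reverse hx]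
  simp [ptail, phead, mul_assoc]

theorem nsmul_sum_comp_tof {M : Type*} [AddCommMonoid M] (x : Fin N) (F : Fin (x.val + 1) → M) :
    (x.val + 1) • ∑ π : Perm (Fin N), F (tof π x) = N ! • ∑ t, F t := by
  have hfiber (t : Fin (x.val + 1)) :
      #{u : ∀ k : Fin N, Fin (k.val + 1) | u x = t} = ∏ k ∈ univ.erase x, (k.val + 1) := by
    simpa using Fintype.card_filter_piFinset_eq_of_mem
      (fun k : Fin N => (univ : Finset (Fin (k.val + 1)))) x (mem_univ t)
  rw [← (Equiv.ofBijective _ Phi_bijective).sum_comp]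
  simp only [Equiv.ofBijective_apply, tof_Phi]
  rw [← Finset.sum_fiberwise univ (fun u => u x)]
  have hinner (t : Fin (x.val + 1)) :
      ∑ u ∈ {u : ∀ k : Fin N, Fin (k.val + 1) | u x = t}, F (u x)
        = (∏ k ∈ univ.erase x, (k.val + 1)) • F t := by
    rw [sum_congr rfl fun u hu => congrArg F (mem_filter.mp hu).2, sum_const, hfiber]
  rw [sum_congr rfl fun t _ => hinner t, ← smul_sum, smul_smul,
    Finset.mul_prod_erase univ (fun k : Fin N => k.val + 1) (mem_univ x),
    Fin.prod_univ_eq_prod_range (· + 1) N, prod_range_add_one_eq_factorial]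

def swapMulSwap (x : Fin N) (s t : Fin (x.val + 1)) : Perm (Fin N) :=
  swap x (emb x s) * swap x (emb x t)

theorem swapMulSwap_left_injective (x : Fin N) (t : Fin (x.val + 1)) :
    Function.Injective fun s => swapMulSwap x s t := fun _ _ h =>
  emb_injective x (swap_injective_of_left x (mul_right_cancel h))

theorem swapMulSwap_self (x : Fin N) (s : Fin (x.val + 1)) : swapMulSwap x s s = 1 :=
  swap_mul_self _ _

theorem swapMulSwap_last_left (x : Fin N) (i : Fin x.val) :
    swapMulSwap x (Fin.last _) i.castSucc = swap x (emb x i.castSucc) := by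
  simp [swapMulSwap, emb_last, ← Perm.one_def]

theorem swapMulSwap_last_right (x : Fin N) (i : Fin x.val) :
    swapMulSwap x i.castSucc (Fin.last _) = swap x (emb x i.castSucc) := by
  simp [swapMulSwap, emb_last, ← Perm.one_def]

theorem cycleType_swap_emb_castSucc (x : Fin N) (i : Fin x.val) :
    (swap x (emb x i.castSucc)).cycleType = {2} :=
  Perm.isSwap_iff_cycleType.mp ⟨_, _, (emb_castSucc_ne x i).symm, rfl⟩

theorem cycleType_swapMulSwap_castSucc (x : Fin N) (i j : Fin x.val) :
    (swapMulSwap x i.castSucc j.castSucc).cycleType = if i = j then 0 else {3} := by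
  split_ifs with h
  · simp [h, swapMulSwap_self]
  · exact Perm.isThreeCycle_swap_mul_swap_same (emb_castSucc_ne x i).symm
      (emb_castSucc_ne x j).symm fun he => h (Fin.castSucc_injective _ (emb_injective x he))

theorem sum_sum_ite_cycleType_swapMulSwap (x : Fin N) (m : Multiset ℕ) :
    ∑ t, ∑ s, (if (swapMulSwap x s t).cycleType = m then (1 : ℂ) else 0) =
      (x.val + 1) * (if m = 0 then 1 else 0) + 2 * x.val * (if m = {2} then 1 else 0) +
        x.val * (x.val - 1) * (if m = {3} then 1 else 0) := by
  simp_rw [eq_comm (b := m)]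
  set a : ℂ := if m = 0 then 1 else 0
  set b₂ : ℂ := if m = {2} then 1 else 0
  set b₃ : ℂ := if m = {3} then 1 else 0
  have hsum (i : Fin x.val) :
      ∑ j : Fin x.val, (if j = i then a else b₃) = a + (x.val - 1) * b₃ := by
    simp_rw [show ∀ j, (if j = i then a else b₃) = (if j = i then a - b₃ else 0) + b₃ from
      fun j => by split_ifs <;> ring]
    rw [sum_add_distrib, sum_ite_eq']
    simp only [mem_univ, if_true, sum_const, card_univ, Fintype.card_fin, nsmul_eq_mul]
    ring
  have hdiag (i j : Fin x.val) :
      (if m = (swapMulSwap x j.castSucc i.castSucc).cycleType then (1 : ℂ) else 0) =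
        if j = i then a else b₃ := by
    by_cases h : j = i <;> simp [a, b₃, h, cycleType_swapMulSwap_castSucc]
  simp only [Fin.sum_univ_castSucc, hdiag, hsum, swapMulSwap_last_left, swapMulSwap_last_right,
    cycleType_swap_emb_castSucc, swapMulSwap_self, Perm.cycleType_one]
  simp only [sum_const, card_univ, Fintype.card_fin, nsmul_eq_mul]
  ring

theorem LR_conj_apply (A : Matrix (Perm (Fin N)) (Perm (Fin N)) ℂ) (τ σ ρ π : Perm (Fin N)) :
    ((Lmat τ * Rmat σ)ᴴ * A * (Lmat τ * Rmat σ)) ρ π = A (τ * ρ * σ⁻¹) (τ * π * σ⁻¹) := by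
  have hLR (a b : Perm (Fin N)) : (Lmat τ * Rmat σ) a b = if a = τ * b * σ⁻¹ then 1 else 0 := by
    simp [Matrix.mul_apply, Lmat, Rmat, mul_assoc]
  simp only [Matrix.mul_apply (M := (Lmat τ * Rmat σ)ᴴ * A),
    Matrix.mul_apply (M := (Lmat τ * Rmat σ)ᴴ), Matrix.conjTranspose_apply, hLR]
  simp

theorem PxPerm_mul_self_apply (x : Fin N) (h π : Perm (Fin N)) :
    PxPerm x (h * π) π = ((x.val : ℂ) + 1)⁻¹ *
      ∑ s, if h = ptail π x * swapMulSwap x s (tof π x) * (ptail π x)⁻¹ then 1 else 0 := by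
  have hcond (s : Fin (x.val + 1)) :
      h * π = ptail π x * swap x (emb x s) * phead π x ↔
        h = ptail π x * swapMulSwap x s (tof π x) * (ptail π x)⁻¹ := by
    have := mul_eq_mul_mul_iff_eq_conj h (ptail π x) (swap x (emb x (tof π x))) (phead π x)
      (swap x (emb x s))
    rwa [ptail_mul_swap_mul_phead, swap_inv] at this
  have hinj : Function.Injective fun s => ptail π x * swapMulSwap x s (tof π x) * (ptail π x)⁻¹ :=
    fun _ _ hs => swapMulSwap_left_injective x _ (mul_left_cancel (mul_right_cancel hs))
  simp only [PxPerm, hcond]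
  split_ifs with hex
  · obtain ⟨s₀, hs₀⟩ := hex
    rw [sum_eq_single s₀ (fun s _ hs => if_neg fun h' => hs (hinj (h'.symm.trans hs₀)))
      (by simp), if_pos hs₀, mul_one]
  · simp only [not_exists] at hex
    simp [hex]

theorem Wmat_apply (l : ℕ) (ρ π : Perm (Fin N)) :
    Wmat l ρ π = if (ρ⁻¹ * π).cycleType = {l} then
      (#{γ : Perm (Fin N) | γ.cycleType = {l}} : ℂ)⁻¹ else 0 := by
  have hR (γ : Perm (Fin N)) : Rmat γ ρ π = if γ = ρ⁻¹ * π then 1 else 0 := by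
    simp only [Rmat, eq_mul_inv_iff_mul_eq, eq_inv_mul_iff_mul_eq]
  simp only [Wmat, ← Perm.cycleType_eq_singleton_iff, Matrix.smul_apply, Matrix.sum_apply, hR,
    sum_ite_eq', mem_filter, mem_univ, true_and, smul_eq_mul]
  split_ifs <;> simp

theorem card_conjClass_mul_sum_sum_PxPerm (x : Fin N) (g : Perm (Fin N)) :
    (#{k | IsConj g k} : ℂ) * ∑ τ, ∑ b, PxPerm x (τ * g * τ⁻¹ * b) b =
      (N ! : ℂ) ^ 2 / ((x.val : ℂ) + 1) ^ 2 *
        ∑ t, ∑ s, if IsConj g (swapMulSwap x s t) then 1 else 0 := by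
  set K : ℂ := ((#{k | IsConj g k} : ℕ) : ℂ)
  have hcount (u d : Perm (Fin N)) :
      K * ∑ τ : Perm (Fin N), (if τ * g * τ⁻¹ = u * d * u⁻¹ then (1 : ℂ) else 0) =
        N ! * if IsConj g d then 1 else 0 := by
    rw [sum_boole, mul_comm, ← Nat.cast_mul, card_conjugators_mul_card_conjClass]
    simp only [isConj_conj_iff]
    split_ifs <;> simp [Fintype.card_perm]
  have htof := nsmul_sum_comp_tof x fun t =>
    ∑ s, if IsConj g (swapMulSwap x s t) then (1 : ℂ) else 0
  simp only [nsmul_eq_mul, Nat.cast_add, Nat.cast_one] at htof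
  calc K * ∑ τ, ∑ b, PxPerm x (τ * g * τ⁻¹ * b) b
      = ((x.val : ℂ) + 1)⁻¹ * ∑ b, ∑ s, K * ∑ τ : Perm (Fin N),
          (if τ * g * τ⁻¹ = ptail b x * swapMulSwap x s (tof b x) * (ptail b x)⁻¹
            then (1 : ℂ) else 0) := by
        simp only [PxPerm_mul_self_apply, mul_sum]
        rw [sum_comm]
        refine sum_congr rfl fun b _ => ?_
        rw [sum_comm]
        exact sum_congr rfl fun s _ => sum_congr rfl fun τ _ => by ring
    _ = ((x.val : ℂ) + 1)⁻¹ * ∑ b : Perm (Fin N),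
          ∑ s, N ! * (if IsConj g (swapMulSwap x s (tof b x)) then (1 : ℂ) else 0) := by
        simp only [hcount]
    _ = _ := by
        simp only [← mul_sum]
        field_simp
        linear_combination (N ! : ℂ) * htof

theorem twirl_PxPerm_apply (x : Fin N) (ρ π : Perm (Fin N)) :
    ((((N.factorial : ℂ)) ^ 2)⁻¹ • ∑ σ : Perm (Fin N), ∑ τ : Perm (Fin N),
        (Lmat τ * Rmat σ)ᴴ * PxPerm x * (Lmat τ * Rmat σ)) ρ π =
      (∑ t, ∑ s, if (swapMulSwap x s t).cycleType = (ρ⁻¹ * π).cycleType then 1 else 0) /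
        (((x.val : ℂ) + 1) ^ 2 * #{k : Perm (Fin N) | k.cycleType = (ρ⁻¹ * π).cycleType}) := by
  have hconj (k : Perm (Fin N)) : IsConj (ρ * π⁻¹) k ↔ k.cycleType = (ρ⁻¹ * π).cycleType := by
    rw [Perm.isConj_iff_cycleType_eq, eq_comm, show ρ * π⁻¹ = ρ * (ρ⁻¹ * π)⁻¹ * ρ⁻¹ by group,
      Perm.cycleType_conj, Perm.cycleType_inv]
  have hK : (#{k | IsConj (ρ * π⁻¹) k} : ℂ) ≠ 0 :=
    Nat.cast_ne_zero.mpr (card_ne_zero_of_mem (mem_filter.mpr ⟨mem_univ _, IsConj.refl _⟩))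
  have key := card_conjClass_mul_sum_sum_PxPerm x (ρ * π⁻¹)
  simp only [hconj] at key hK
  simp only [Matrix.smul_apply, Matrix.sum_apply, LR_conj_apply, smul_eq_mul]
  rw [sum_sum_mul_mul_inv (PxPerm x ·)]
  have hN : (N ! : ℂ) ≠ 0 := Nat.cast_ne_zero.mpr (Nat.factorial_ne_zero N)
  have hX : (x.val : ℂ) + 1 ≠ 0 := Nat.cast_add_one_ne_zero x.val
  field_simp at key ⊢
  linear_combination key

theorem stmt13_general {N : ℕ} (x : Fin N) :
    (((N.factorial : ℂ)) ^ 2)⁻¹ •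
        ∑ σ : Equiv.Perm (Fin N), ∑ τ : Equiv.Perm (Fin N),
          (Lmat τ * Rmat σ)ᴴ * PxPerm x * (Lmat τ * Rmat σ)
      = ((x.val : ℂ) + 1)⁻¹ • (1 : Matrix (Equiv.Perm (Fin N)) (Equiv.Perm (Fin N)) ℂ)
        + ((2 * (x.val : ℂ)) / ((x.val : ℂ) + 1) ^ 2) • Wmat 2
        + (((x.val : ℂ) * ((x.val : ℂ) - 1)) / ((x.val : ℂ) + 1) ^ 2) • Wmat 3 := by
  ext ρ π
  have hid : ρ = π ↔ (ρ⁻¹ * π).cycleType = 0 := by rw [Perm.cycleType_eq_zero, inv_mul_eq_one]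
  rw [twirl_PxPerm_apply, sum_sum_ite_cycleType_swapMulSwap]
  simp only [Matrix.add_apply, Matrix.smul_apply, Wmat_apply, Matrix.one_apply, hid, smul_eq_mul]
  generalize (ρ⁻¹ * π).cycleType = m
  rw [div_eq_mul_inv, mul_inv]
  by_cases h₀ : m = 0
  · subst h₀
    simp only [Perm.card_filter_cycleType_eq_zero, ↓reduceIte, mul_one, Multiset.zero_ne_singleton,
      mul_zero, add_zero, Nat.cast_one, inv_one]
    field_simp
  by_cases h₂ : m = {2}
  · subst h₂
    simp only [Multiset.singleton_ne_zero, ↓reduceIte, mul_zero, mul_one, zero_add,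
      Multiset.singleton_inj, Nat.reduceEqDiff, add_zero]
    ring
  by_cases h₃ : m = {3}
  · subst h₃
    simp only [Multiset.singleton_ne_zero, ↓reduceIte, mul_zero, Multiset.singleton_inj,
      Nat.succ_ne_self, add_zero, mul_one, zero_add]
    ring
  · simp [h₀, h₂, h₃]

/-- For every `x ∈ [N]`,
`(1/(N!)²) ∑_{σ,τ} (L^τ R^σ)† P_x (L^τ R^σ)
  = (1/x) I + (2(x−1)/x²) W^{(2)} + ((x−1)(x−2)/x²) W^{(3)}` on `ℓ²(S_N)`. -/
theorem stmt13 {N : ℕ} (hN : 3 ≤ N) (x : Fin N) :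
    (((N.factorial : ℂ)) ^ 2)⁻¹ •
        ∑ σ : Equiv.Perm (Fin N), ∑ τ : Equiv.Perm (Fin N),
          (Lmat τ * Rmat σ)ᴴ * PxPerm x * (Lmat τ * Rmat σ)
      = ((x.val : ℂ) + 1)⁻¹ • (1 : Matrix (Equiv.Perm (Fin N)) (Equiv.Perm (Fin N)) ℂ)
        + ((2 * (x.val : ℂ)) / ((x.val : ℂ) + 1) ^ 2) • Wmat 2
        + (((x.val : ℂ) * ((x.val : ℂ) - 1)) / ((x.val : ℂ) + 1) ^ 2) • Wmat 3 :=
  stmt13_general x
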